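/- arXiv:1406.3653 — 3 statements merged into one kernel-verified Lean document; each statement's English description precedes it below -/
import Mathlib

section
/- Let C_1,...,C_T : ℝ → ℝ be convex functions, let X = {x : -P_o ≤ x ≤ P_i}, ρ ∈ (0,1], and for a vector S = (S_0,...,S_T) define x_t(S) = S_t - ρ·S_{t-1}. Suppose S* satisfies the feasibility constraints (S*_0 and S*_T fixed, 0 ≤ S*_t ≤ E for 1 ≤ t ≤ T-1, and x_t(S*) ∈ X for all t), and suppose there exists μ* = (μ*_1,...,μ*_T) such that (i) for each t, x_t(S*) minimises C_t(x) - μ*_t·x over x ∈ X, and (ii) for 1 ≤ t ≤ T-1: ρ·μ*_{t+1} = μ*_t if 0 < S*_t < E, ρ·μ*_{t+1} ≤ μ*_t if S*_t = 0, and ρ·μ*_{t+1} ≥ μ*_t if S*_t = E. Then S* minimises ∑_{t=1}^T C_t(x_t(S)) over all feasible S with the same endpoints S_0 = S*_0 and S_T = S*_T. -/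
/-!
Lagrangian sufficiency. Put `D = S - S*`, so that `x_t(S) - x_t(S*) = D_t - ρ D_{t-1}`.
Minimality of `x_t(S*)` for `C_t(x) - μ*_t x` gives
`C_t(x_t(S*)) ≤ C_t(x_t(S)) - μ*_t (D_t - ρ D_{t-1})` term by term. Since `D_0 = D_T = 0`,
summation by parts turns `∑ μ*_t (D_t - ρ D_{t-1})` into `∑_{t<T} (μ*_t - ρ μ*_{t+1}) D_t`,
and every term of this is nonnegative by complementary slackness: the sign of `D_t` is forced
exactly when `S*_t` sits on the boundary of `[0, E]`.
-/

open Finset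

lemma sum_Icc_mul_sub_mul_pred (μ D : ℕ → ℝ) (ρ : ℝ) (n : ℕ) :
    ∑ t ∈ Icc 1 (n + 1), μ t * (D t - ρ * D (t - 1))
      = μ (n + 1) * D (n + 1) - ρ * μ 1 * D 0
        + ∑ t ∈ Icc 1 n, (μ t - ρ * μ (t + 1)) * D t := by
  induction n with
  | zero =>
    simp only [zero_add, Icc_self, sum_singleton, tsub_self, Icc_eq_empty_of_lt one_pos, sum_empty]
    ring
  | succ n ih =>
    rw [sum_Icc_succ_top (by omega), ih, sum_Icc_succ_top (by omega)]
    simp only [Nat.add_sub_cancel]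
    ring

lemma sum_Icc_mul_sub_mul_pred_of_eq_zero {μ D : ℕ → ℝ} (ρ : ℝ) {T : ℕ}
    (h0 : D 0 = 0) (hT : D T = 0) :
    ∑ t ∈ Icc 1 T, μ t * (D t - ρ * D (t - 1))
      = ∑ t ∈ Icc 1 (T - 1), (μ t - ρ * μ (t + 1)) * D t := by
  cases T with
  | zero => simp
  | succ n => rw [sum_Icc_mul_sub_mul_pred, h0, hT]; simp

lemma sub_mul_sub_nonneg_of_slackness {b c s s' E : ℝ}
    (hs : 0 ≤ s ∧ s ≤ E) (hs' : 0 ≤ s' ∧ s' ≤ E)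
    (hslack : ((0 < s ∧ s < E) → b = c) ∧ (s = 0 → b ≤ c) ∧ (s = E → b ≥ c)) :
    0 ≤ (c - b) * (s' - s) := by
  obtain ⟨hint, hlow, hupp⟩ := hslack
  rcases hs.1.lt_or_eq with hpos | hzero
  · rcases hs.2.lt_or_eq with hltE | hE
    · simp [hint ⟨hpos, hltE⟩]
    · exact mul_nonneg_of_nonpos_of_nonpos (by linarith [hupp hE]) (by linarith)
  · exact mul_nonneg (by linarith [hlow hzero.symm]) (by linarith)

theorem storage_lagrangian_sufficiency_general
    (T : ℕ)
    (C : ℕ → ℝ → ℝ)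
    (Po Pi E ρ : ℝ)
    (Sstar μstar : ℕ → ℝ)
    -- (i) feasibility of S*
    (hfeas_cap : ∀ t, 1 ≤ t → t ≤ T - 1 → 0 ≤ Sstar t ∧ Sstar t ≤ E)
    -- (ii) x_t(S*) minimises C_t(x) - μ*_t x over X
    (hmin : ∀ t, 1 ≤ t → t ≤ T → ∀ x, -Po ≤ x → x ≤ Pi →
      C t (Sstar t - ρ * Sstar (t - 1)) - μstar t * (Sstar t - ρ * Sstar (t - 1))
        ≤ C t x - μstar t * x)
    -- (iii) complementary slackness
    (hslack : ∀ t, 1 ≤ t → t ≤ T - 1 →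
      ((0 < Sstar t ∧ Sstar t < E) → ρ * μstar (t + 1) = μstar t) ∧
      (Sstar t = 0 → ρ * μstar (t + 1) ≤ μstar t) ∧
      (Sstar t = E → ρ * μstar (t + 1) ≥ μstar t)) :
    -- conclusion: S* minimises total cost among feasible S with the same endpoints
    ∀ S : ℕ → ℝ, S 0 = Sstar 0 → S T = Sstar T →
      (∀ t, 1 ≤ t → t ≤ T - 1 → 0 ≤ S t ∧ S t ≤ E) →
      (∀ t, 1 ≤ t → t ≤ T →
        -Po ≤ S t - ρ * S (t - 1) ∧ S t - ρ * S (t - 1) ≤ Pi) →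
      ∑ t ∈ Finset.Icc 1 T, C t (Sstar t - ρ * Sstar (t - 1))
        ≤ ∑ t ∈ Finset.Icc 1 T, C t (S t - ρ * S (t - 1)) := by
  intro S hS0 hST hcap hrate
  set D : ℕ → ℝ := fun t => S t - Sstar t
  have hmultiplier : 0 ≤ ∑ t ∈ Icc 1 T, μstar t * (D t - ρ * D (t - 1)) := by
    rw [sum_Icc_mul_sub_mul_pred_of_eq_zero ρ (by simp [D, hS0]) (by simp [D, hST])]
    refine sum_nonneg fun t ht => ?_
    obtain ⟨ht1, htT⟩ := mem_Icc.mp ht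
    exact sub_mul_sub_nonneg_of_slackness (hfeas_cap t ht1 htT) (hcap t ht1 htT)
      (hslack t ht1 htT)
  have hterm : ∀ t ∈ Icc 1 T, C t (Sstar t - ρ * Sstar (t - 1))
      ≤ C t (S t - ρ * S (t - 1)) - μstar t * (D t - ρ * D (t - 1)) := by
    intro t ht
    obtain ⟨ht1, htT⟩ := mem_Icc.mp ht
    obtain ⟨hlow, hupp⟩ := hrate t ht1 htT
    linear_combination hmin t ht1 htT _ hlow hupp
  calc ∑ t ∈ Icc 1 T, C t (Sstar t - ρ * Sstar (t - 1))
      ≤ ∑ t ∈ Icc 1 T, (C t (S t - ρ * S (t - 1)) - μstar t * (D t - ρ * D (t - 1))) :=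
        sum_le_sum hterm
    _ = ∑ t ∈ Icc 1 T, C t (S t - ρ * S (t - 1))
          - ∑ t ∈ Icc 1 T, μstar t * (D t - ρ * D (t - 1)) := sum_sub_distrib _ _
    _ ≤ ∑ t ∈ Icc 1 T, C t (S t - ρ * S (t - 1)) := sub_le_self _ hmultiplier

/-- Lagrangian sufficiency for the storage problem. -/
theorem storage_lagrangian_sufficiency
    (T : ℕ) (hT : 1 ≤ T)
    (C : ℕ → ℝ → ℝ) (hC : ∀ t, ConvexOn ℝ Set.univ (C t))
    (Po Pi E ρ : ℝ) (hρ0 : 0 < ρ) (hρ1 : ρ ≤ 1)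
    (Sstar μstar : ℕ → ℝ)
    -- (i) feasibility of S*
    (hfeas_cap : ∀ t, 1 ≤ t → t ≤ T - 1 → 0 ≤ Sstar t ∧ Sstar t ≤ E)
    (hfeas_rate : ∀ t, 1 ≤ t → t ≤ T →
      -Po ≤ Sstar t - ρ * Sstar (t - 1) ∧ Sstar t - ρ * Sstar (t - 1) ≤ Pi)
    -- (ii) x_t(S*) minimises C_t(x) - μ*_t x over X
    (hmin : ∀ t, 1 ≤ t → t ≤ T → ∀ x, -Po ≤ x → x ≤ Pi →
      C t (Sstar t - ρ * Sstar (t - 1)) - μstar t * (Sstar t - ρ * Sstar (t - 1))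
        ≤ C t x - μstar t * x)
    -- (iii) complementary slackness
    (hslack : ∀ t, 1 ≤ t → t ≤ T - 1 →
      ((0 < Sstar t ∧ Sstar t < E) → ρ * μstar (t + 1) = μstar t) ∧
      (Sstar t = 0 → ρ * μstar (t + 1) ≤ μstar t) ∧
      (Sstar t = E → ρ * μstar (t + 1) ≥ μstar t)) :
    -- conclusion: S* minimises total cost among feasible S with the same endpoints
    ∀ S : ℕ → ℝ, S 0 = Sstar 0 → S T = Sstar T →
      (∀ t, 1 ≤ t → t ≤ T - 1 → 0 ≤ S t ∧ S t ≤ E) →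
      (∀ t, 1 ≤ t → t ≤ T →
        -Po ≤ S t - ρ * S (t - 1) ∧ S t - ρ * S (t - 1) ≤ Pi) →
      ∑ t ∈ Finset.Icc 1 T, C t (Sstar t - ρ * Sstar (t - 1))
        ≤ ∑ t ∈ Finset.Icc 1 T, C t (S t - ρ * S (t - 1)) :=
  storage_lagrangian_sufficiency_general T C Po Pi E ρ Sstar μstar hfeas_cap hmin hslack
end

section
/- Suppose in Theorem on Lagrangian sufficiency the cost functions C_t are nondecreasing. If (S*, μ*) satisfies conditions (i)–(iii) of that theorem (feasibility; x_t(S*) minimises C_t(x) - μ*_t x over X; and the complementary slackness conditions ρμ*_{t+1} = μ*_t if 0 < S*_t < E, ρμ*_{t+1} ≤ μ*_t if S*_t = 0, ρμ*_{t+1} ≥ μ*_t if S*_t = E), then the pair (S*, max(μ*, 0)) (componentwise maximum with 0) also satisfies all three conditions. In particular the multiplier vector may be taken nonnegative. -/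
/-!
For a nondecreasing cost `C` and a multiplier `μ ≤ 0`, a minimiser `d` of `C x - μ x` already
minimises `C` itself: points above `d` cost at least as much by monotonicity, and for points
`x < d` the penalty `μ (d - x)` is nonpositive. So a negative multiplier may be replaced by `0`.
The slackness conditions survive because `y ↦ max y 0` is monotone and commutes with
multiplication by `ρ ≥ 0`.
-/

section

variable {R : Type*} [CommRing R] [LinearOrder R] [IsStrictOrderedRing R]

theorem isMinOn_of_isMinOn_sub_mul_of_nonpos {C : R → R} {s : Set R} {d μ : R}
    (hd : IsMinOn (fun x => C x - μ * x) s d) (hμ : μ ≤ 0) (hC : Monotone C) :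
    IsMinOn C s d := by
  refine isMinOn_iff.mpr fun x hx => ?_
  rcases le_or_gt d x with hdx | hxd
  · exact hC hdx
  · have hpenalty : μ * (d - x) ≤ 0 :=
      mul_nonpos_of_nonpos_of_nonneg hμ (sub_nonneg.mpr hxd.le)
    have := isMinOn_iff.mp hd x hx
    linarith

theorem isMinOn_sub_max_zero_mul_of_monotone {C : R → R} {s : Set R} {d μ : R}
    (hd : IsMinOn (fun x => C x - μ * x) s d) (hC : Monotone C) :
    IsMinOn (fun x => C x - max μ 0 * x) s d := by
  rcases le_total 0 μ with hμ | hμ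
  · rwa [max_eq_left hμ]
  · simpa only [max_eq_right hμ, zero_mul, sub_zero] using
      isMinOn_of_isMinOn_sub_mul_of_nonpos hd hμ hC

theorem mul_max_zero_of_nonneg {ρ : R} (hρ : 0 ≤ ρ) (a : R) :
    ρ * max a 0 = max (ρ * a) 0 := by
  rw [mul_max_of_nonneg _ _ hρ, mul_zero]

end

theorem multiplier_may_be_taken_nonnegative_general
    (T : ℕ)
    (C : ℕ → ℝ → ℝ)
    (hCmono : ∀ t, Monotone (C t))
    (Po Pi E ρ : ℝ) (hρ0 : 0 < ρ)
    (Sstar μstar : ℕ → ℝ)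
    -- (i) feasibility of S*
    (hfeas_cap : ∀ t, 1 ≤ t → t ≤ T - 1 → 0 ≤ Sstar t ∧ Sstar t ≤ E)
    (hfeas_rate : ∀ t, 1 ≤ t → t ≤ T →
      -Po ≤ Sstar t - ρ * Sstar (t - 1) ∧ Sstar t - ρ * Sstar (t - 1) ≤ Pi)
    -- (ii) minimisation property for μ*
    (hmin : ∀ t, 1 ≤ t → t ≤ T → ∀ x, -Po ≤ x → x ≤ Pi →
      C t (Sstar t - ρ * Sstar (t - 1)) - μstar t * (Sstar t - ρ * Sstar (t - 1))
        ≤ C t x - μstar t * x)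
    -- (iii) complementary slackness for μ*
    (hslack : ∀ t, 1 ≤ t → t ≤ T - 1 →
      ((0 < Sstar t ∧ Sstar t < E) → ρ * μstar (t + 1) = μstar t) ∧
      (Sstar t = 0 → ρ * μstar (t + 1) ≤ μstar t) ∧
      (Sstar t = E → ρ * μstar (t + 1) ≥ μstar t)) :
    -- the pair (S*, max(μ*,0)) satisfies the same three conditions
    ((∀ t, 1 ≤ t → t ≤ T - 1 → 0 ≤ Sstar t ∧ Sstar t ≤ E) ∧
     (∀ t, 1 ≤ t → t ≤ T →
       -Po ≤ Sstar t - ρ * Sstar (t - 1) ∧ Sstar t - ρ * Sstar (t - 1) ≤ Pi)) ∧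
    (∀ t, 1 ≤ t → t ≤ T → ∀ x, -Po ≤ x → x ≤ Pi →
      C t (Sstar t - ρ * Sstar (t - 1))
          - max (μstar t) 0 * (Sstar t - ρ * Sstar (t - 1))
        ≤ C t x - max (μstar t) 0 * x) ∧
    (∀ t, 1 ≤ t → t ≤ T - 1 →
      ((0 < Sstar t ∧ Sstar t < E) → ρ * max (μstar (t + 1)) 0 = max (μstar t) 0) ∧
      (Sstar t = 0 → ρ * max (μstar (t + 1)) 0 ≤ max (μstar t) 0) ∧
      (Sstar t = E → ρ * max (μstar (t + 1)) 0 ≥ max (μstar t) 0)) := by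
  refine ⟨⟨hfeas_cap, hfeas_rate⟩, fun t h1 hT x hx1 hx2 => ?_, fun t h1 hT => ?_⟩
  · have hmin_t : IsMinOn (fun x => C t x - μstar t * x) (Set.Icc (-Po) Pi)
        (Sstar t - ρ * Sstar (t - 1)) :=
      isMinOn_iff.mpr fun x hx => hmin t h1 hT x hx.1 hx.2
    exact isMinOn_iff.mp (isMinOn_sub_max_zero_mul_of_monotone hmin_t (hCmono t)) x ⟨hx1, hx2⟩
  · obtain ⟨hinterior, hempty, hfull⟩ := hslack t h1 hT
    simp only [mul_max_zero_of_nonneg hρ0.le, ge_iff_le]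
    exact ⟨fun h => by rw [hinterior h], fun h => max_le_max_right 0 (hempty h),
      fun h => max_le_max_right 0 (hfull h)⟩

/-- If the cost functions are nondecreasing, the multiplier vector in the Lagrangian
sufficiency theorem may be taken nonnegative: replacing μ* by max(μ*, 0) preserves
conditions (i)–(iii). -/
theorem multiplier_may_be_taken_nonnegative
    (T : ℕ) (hT : 1 ≤ T)
    (C : ℕ → ℝ → ℝ) (hC : ∀ t, ConvexOn ℝ Set.univ (C t))
    (hCmono : ∀ t, Monotone (C t))
    (Po Pi E ρ : ℝ) (hρ0 : 0 < ρ) (hρ1 : ρ ≤ 1)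
    (Sstar μstar : ℕ → ℝ)
    -- (i) feasibility of S*
    (hfeas_cap : ∀ t, 1 ≤ t → t ≤ T - 1 → 0 ≤ Sstar t ∧ Sstar t ≤ E)
    (hfeas_rate : ∀ t, 1 ≤ t → t ≤ T →
      -Po ≤ Sstar t - ρ * Sstar (t - 1) ∧ Sstar t - ρ * Sstar (t - 1) ≤ Pi)
    -- (ii) minimisation property for μ*
    (hmin : ∀ t, 1 ≤ t → t ≤ T → ∀ x, -Po ≤ x → x ≤ Pi →
      C t (Sstar t - ρ * Sstar (t - 1)) - μstar t * (Sstar t - ρ * Sstar (t - 1))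
        ≤ C t x - μstar t * x)
    -- (iii) complementary slackness for μ*
    (hslack : ∀ t, 1 ≤ t → t ≤ T - 1 →
      ((0 < Sstar t ∧ Sstar t < E) → ρ * μstar (t + 1) = μstar t) ∧
      (Sstar t = 0 → ρ * μstar (t + 1) ≤ μstar t) ∧
      (Sstar t = E → ρ * μstar (t + 1) ≥ μstar t)) :
    -- the pair (S*, max(μ*,0)) satisfies the same three conditions
    ((∀ t, 1 ≤ t → t ≤ T - 1 → 0 ≤ Sstar t ∧ Sstar t ≤ E) ∧
     (∀ t, 1 ≤ t → t ≤ T →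
       -Po ≤ Sstar t - ρ * Sstar (t - 1) ∧ Sstar t - ρ * Sstar (t - 1) ≤ Pi)) ∧
    (∀ t, 1 ≤ t → t ≤ T → ∀ x, -Po ≤ x → x ≤ Pi →
      C t (Sstar t - ρ * Sstar (t - 1))
          - max (μstar t) 0 * (Sstar t - ρ * Sstar (t - 1))
        ≤ C t x - max (μstar t) 0 * x) ∧
    (∀ t, 1 ≤ t → t ≤ T - 1 →
      ((0 < Sstar t ∧ Sstar t < E) → ρ * max (μstar (t + 1)) 0 = max (μstar t) 0) ∧
      (Sstar t = 0 → ρ * max (μstar (t + 1)) 0 ≤ max (μstar t) 0) ∧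
      (Sstar t = E → ρ * max (μstar (t + 1)) 0 ≥ max (μstar t) 0)) :=
  multiplier_may_be_taken_nonnegative_general T C hCmono Po Pi E ρ hρ0 Sstar μstar hfeas_cap
    hfeas_rate hmin hslack
end

section
/- Corollary of the martingale scaling result: under the hypotheses of the martingale cost-scaling theorem with ξ_0 = 1 (or F_0 trivial and E[ξ_1] = 1), the optimal value of the stochastic storage problem equals the optimal value of the deterministic problem with cost functions C̄_t, and the deterministic optimal sequence of store levels is optimal for the stochastic problem. -/
/-!
Given an adapted feasible strategy `S`, tilt `P` by the density `ξ t` at each time `t`. The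
tilted means `s t = E[ξ t * S t]` form a deterministic strategy: the box constraints survive
averaging, and the martingale property `E[ξ t * S (t - 1)] = E[ξ (t - 1) * S (t - 1)]` turns
`s t - ρ * s (t - 1)` into the tilted mean of `S t - ρ * S (t - 1)`. Jensen's inequality for
the tilted measure bounds `C̄ t (s t - ρ * s (t - 1))` by `E[ξ t * C̄ t (S t - ρ * S (t - 1))]`,
so the stochastic cost of `S` dominates the deterministic cost of `s`, hence the deterministic
optimum. Since `E[ξ t] = ξ 0 = 1`, the deterministic optimum has the same cost in both problems.
-/

open MeasureTheory Set

section Tilting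

variable {Ω E : Type*} {m0 : MeasurableSpace Ω} {P : Measure Ω} {f : Ω → ℝ}
  [NormedAddCommGroup E] [NormedSpace ℝ E]

theorem integral_withDensity_ofReal (hf0 : 0 ≤ᵐ[P] f) (hf : AEMeasurable f P) (g : Ω → E) :
    ∫ ω, g ω ∂P.withDensity (fun ω => ENNReal.ofReal (f ω)) = ∫ ω, f ω • g ω ∂P := by
  rw [integral_withDensity_eq_integral_toReal_smul₀ hf.ennreal_ofReal
    (ae_of_all _ fun _ => ENNReal.ofReal_lt_top)]
  refine integral_congr_ae ?_
  filter_upwards [hf0] with ω hω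
  rw [ENNReal.toReal_ofReal hω]

theorem integrable_withDensity_ofReal_iff (hf0 : 0 ≤ᵐ[P] f) (hf : AEMeasurable f P)
    {g : Ω → E} :
    Integrable g (P.withDensity fun ω => ENNReal.ofReal (f ω)) ↔
      Integrable (fun ω => f ω • g ω) P := by
  rw [integrable_withDensity_iff_integrable_smul₀' hf.ennreal_ofReal
    (ae_of_all _ fun _ => ENNReal.ofReal_lt_top)]
  refine integrable_congr ?_
  filter_upwards [hf0] with ω hω
  rw [ENNReal.toReal_ofReal hω]

theorem isProbabilityMeasure_withDensity_ofReal (hf0 : 0 ≤ᵐ[P] f) (hfi : Integrable f P)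
    (hf1 : ∫ ω, f ω ∂P = 1) :
    IsProbabilityMeasure (P.withDensity fun ω => ENNReal.ofReal (f ω)) := by
  constructor
  rw [withDensity_apply _ MeasurableSet.univ, setLIntegral_univ,
    ← ofReal_integral_eq_lintegral_ofReal hfi hf0, hf1, ENNReal.ofReal_one]

variable [CompleteSpace E] {s : Set E} {g : Ω → E}

theorem Convex.integral_smul_mem (hs : Convex ℝ s) (hsc : IsClosed s) (hf0 : 0 ≤ᵐ[P] f)
    (hfi : Integrable f P) (hf1 : ∫ ω, f ω ∂P = 1) (hgs : ∀ᵐ ω ∂P, g ω ∈ s)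
    (hfg : Integrable (fun ω => f ω • g ω) P) :
    ∫ ω, f ω • g ω ∂P ∈ s := by
  have := isProbabilityMeasure_withDensity_ofReal hf0 hfi hf1
  rw [← integral_withDensity_ofReal hf0 hfi.aemeasurable]
  exact hs.integral_mem hsc (withDensity_absolutelyContinuous _ _ |>.ae_le hgs)
    ((integrable_withDensity_ofReal_iff hf0 hfi.aemeasurable).2 hfg)

theorem ConvexOn.map_integral_smul_le {φ : E → ℝ} (hφ : ConvexOn ℝ s φ)
    (hφc : ContinuousOn φ s) (hsc : IsClosed s) (hf0 : 0 ≤ᵐ[P] f) (hfi : Integrable f P)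
    (hf1 : ∫ ω, f ω ∂P = 1) (hgs : ∀ᵐ ω ∂P, g ω ∈ s)
    (hfg : Integrable (fun ω => f ω • g ω) P) (hfφg : Integrable (fun ω => f ω * φ (g ω)) P) :
    φ (∫ ω, f ω • g ω ∂P) ≤ ∫ ω, f ω * φ (g ω) ∂P := by
  have := isProbabilityMeasure_withDensity_ofReal hf0 hfi hf1
  have hg := (integrable_withDensity_ofReal_iff hf0 hfi.aemeasurable).2 hfg
  have hφg := (integrable_withDensity_ofReal_iff hf0 hfi.aemeasurable (g := φ ∘ g)).2 hfφg
  simpa only [integral_withDensity_ofReal hf0 hfi.aemeasurable, smul_eq_mul] using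
    hφ.map_integral_le hφc hsc (withDensity_absolutelyContinuous _ _ |>.ae_le hgs) hg hφg

end Tilting

section Compact

variable {Ω : Type*} {m0 : MeasurableSpace Ω} {P : Measure Ω} {f g : Ω → ℝ} {K : Set ℝ}

theorem MeasureTheory.Integrable.mul_of_ae_mem_isCompact (hf : Integrable f P)
    (hg : AEStronglyMeasurable g P) (hK : IsCompact K) (hgK : ∀ᵐ ω ∂P, g ω ∈ K) :
    Integrable (fun ω => f ω * g ω) P := by
  obtain ⟨C, hC⟩ := hK.isBounded.exists_norm_le
  exact hf.mul_bdd hg (hgK.mono fun ω h => hC _ h)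

theorem MeasureTheory.Integrable.mul_comp_of_ae_mem_isCompact (hf : Integrable f P)
    {φ : ℝ → ℝ} (hφ : Continuous φ) (hg : AEStronglyMeasurable g P) (hK : IsCompact K)
    (hgK : ∀ᵐ ω ∂P, g ω ∈ K) :
    Integrable (fun ω => f ω * φ (g ω)) P :=
  hf.mul_of_ae_mem_isCompact (hφ.comp_aestronglyMeasurable hg) (hK.image hφ)
    (hgK.mono fun _ h => mem_image_of_mem φ h)

theorem ConvexOn.map_integral_mul_le_of_ae_mem_Icc {φ : ℝ → ℝ} (hφ : ConvexOn ℝ univ φ)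
    (hf0 : 0 ≤ᵐ[P] f) (hfi : Integrable f P) (hf1 : ∫ ω, f ω ∂P = 1)
    (hg : AEStronglyMeasurable g P) {a b : ℝ} (hgab : ∀ᵐ ω ∂P, g ω ∈ Icc a b) :
    φ (∫ ω, f ω * g ω ∂P) ≤ ∫ ω, f ω * φ (g ω) ∂P := by
  have hφc : Continuous φ := continuousOn_univ.1 (hφ.continuousOn isOpen_univ)
  exact (hφ.subset (subset_univ _) (convex_Icc a b)).map_integral_smul_le hφc.continuousOn
    isClosed_Icc hf0 hfi hf1 hgab (hfi.mul_of_ae_mem_isCompact hg isCompact_Icc hgab)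
    (hfi.mul_comp_of_ae_mem_isCompact hφc hg isCompact_Icc hgab)

end Compact

section MartingaleMul

variable {Ω ι : Type*} [Preorder ι] {m0 : MeasurableSpace Ω} {P : Measure Ω} [IsFiniteMeasure P]
  {ℱ : Filtration ι m0} {ξ : ι → Ω → ℝ} {i j : ι}

theorem MeasureTheory.Martingale.integral_eq (hξ : Martingale ξ ℱ P) (hij : i ≤ j) :
    ∫ ω, ξ i ω ∂P = ∫ ω, ξ j ω ∂P := by
  simpa only [setIntegral_univ] using hξ.setIntegral_eq hij MeasurableSet.univ

theorem MeasureTheory.Martingale.integral_mul_eq_of_bound (hξ : Martingale ξ ℱ P)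
    (hij : i ≤ j) {g : Ω → ℝ} (hg : StronglyMeasurable[ℱ i] g) {C : ℝ}
    (hgC : ∀ᵐ ω ∂P, ‖g ω‖ ≤ C) :
    ∫ ω, ξ j ω * g ω ∂P = ∫ ω, ξ i ω * g ω ∂P := by
  have hpull := condExp_stronglyMeasurable_mul_of_bound (ℱ.le i) hg (hξ.integrable j) C hgC
  calc ∫ ω, ξ j ω * g ω ∂P = ∫ ω, (g * ξ j) ω ∂P := by simp only [Pi.mul_apply, mul_comm]
    _ = ∫ ω, (P[g * ξ j | ℱ i]) ω ∂P := (integral_condExp (ℱ.le i)).symm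
    _ = ∫ ω, ξ i ω * g ω ∂P := integral_congr_ae <| by
      filter_upwards [hpull, hξ.condExp_ae_eq hij] with ω h1 h2
      rw [h1, Pi.mul_apply, h2, mul_comm]

theorem MeasureTheory.Martingale.integral_mul_sub_mul_eq (hξ : Martingale ξ ℱ P)
    {S : ι → Ω → ℝ} (hS : Adapted ℱ S) (hij : i ≤ j) (a : ℝ) {C : ℝ}
    (hSi : ∀ᵐ ω ∂P, ‖S i ω‖ ≤ C) (hSj : ∀ᵐ ω ∂P, ‖S j ω‖ ≤ C) :
    ∫ ω, ξ j ω * (S j ω - a * S i ω) ∂P =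
      ∫ ω, ξ j ω * S j ω ∂P - a * ∫ ω, ξ i ω * S i ω ∂P := by
  have hSm : ∀ k, AEStronglyMeasurable (S k) P := fun k =>
    ((hS k).stronglyMeasurable.mono (ℱ.le k)).aestronglyMeasurable
  simp only [mul_sub, mul_left_comm _ a]
  rw [integral_sub ((hξ.integrable j).mul_bdd (hSm j) hSj)
      (((hξ.integrable j).mul_bdd (hSm i) hSi).const_mul a),
    integral_const_mul, hξ.integral_mul_eq_of_bound hij (hS i).stronglyMeasurable hSi]

end MartingaleMul

/-- Store levels with initial level `S0`, final level `ST`, capacity `E`, maximal output and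
input rates `Po` and `Pi`, and retention factor `ρ` per period. -/
def IsFeasibleLevels (T : ℕ) (S0 ST E Po Pi ρ : ℝ) (s : ℕ → ℝ) : Prop :=
  s 0 = S0 ∧ s T = ST ∧ (∀ t, 1 ≤ t → t ≤ T - 1 → s t ∈ Icc 0 E) ∧
    ∀ t, 1 ≤ t → t ≤ T → s t - ρ * s (t - 1) ∈ Icc (-Po) Pi

section Storage

variable {T : ℕ} {S0 ST E Po Pi ρ : ℝ}

theorem IsFeasibleLevels.norm_le {s : ℕ → ℝ} (hs : IsFeasibleLevels T S0 ST E Po Pi ρ s)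
    {t : ℕ} (ht : t ≤ T) : ‖s t‖ ≤ |S0| + |ST| + |E| := by
  obtain ⟨h0, hT, hcap, -⟩ := hs
  rw [Real.norm_eq_abs]
  have := abs_nonneg S0; have := abs_nonneg ST; have := abs_nonneg E
  rcases Nat.eq_zero_or_pos t with rfl | ht0
  · rw [h0]; linarith
  rcases eq_or_lt_of_le ht with rfl | htT
  · rw [hT]; linarith
  obtain ⟨hl, hu⟩ := hcap t ht0 (by omega)
  rw [abs_le]; constructor <;> linarith [le_abs_self E]

variable {Ω : Type*} {m0 : MeasurableSpace Ω} {P : Measure Ω} [IsProbabilityMeasure P]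
  {ℱ : Filtration ℕ m0} {ξ S : ℕ → Ω → ℝ}

theorem MeasureTheory.Martingale.integral_eq_one (hξ : Martingale ξ ℱ P)
    (hξ0 : ξ 0 =ᵐ[P] fun _ => 1) (t : ℕ) : ∫ ω, ξ t ω ∂P = 1 := by
  rw [← hξ.integral_eq (Nat.zero_le t), integral_congr_ae hξ0]
  simp

theorem integral_mul_sub_mul_eq_of_isFeasibleLevels (hξ : Martingale ξ ℱ P) (hS : Adapted ℱ S)
    (hfeas : ∀ᵐ ω ∂P, IsFeasibleLevels T S0 ST E Po Pi ρ fun t => S t ω) {t : ℕ} (ht : t ≤ T) :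
    ∫ ω, ξ t ω * (S t ω - ρ * S (t - 1) ω) ∂P =
      ∫ ω, ξ t ω * S t ω ∂P - ρ * ∫ ω, ξ (t - 1) ω * S (t - 1) ω ∂P :=
  hξ.integral_mul_sub_mul_eq hS (Nat.sub_le t 1) ρ
    (hfeas.mono fun _ h => h.norm_le ((Nat.sub_le t 1).trans ht))
    (hfeas.mono fun _ h => h.norm_le ht)

theorem isFeasibleLevels_integral_mul (hξ : Martingale ξ ℱ P) (hξ0 : ξ 0 =ᵐ[P] fun _ => 1)
    (hξnn : ∀ t, 0 ≤ᵐ[P] ξ t) (hS : Adapted ℱ S)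
    (hfeas : ∀ᵐ ω ∂P, IsFeasibleLevels T S0 ST E Po Pi ρ fun t => S t ω) :
    IsFeasibleLevels T S0 ST E Po Pi ρ fun t => ∫ ω, ξ t ω * S t ω ∂P := by
  have hSm : ∀ t, AEStronglyMeasurable (S t) P := fun t =>
    ((hS t).stronglyMeasurable.mono (ℱ.le t)).aestronglyMeasurable
  have hmean := hξ.integral_eq_one hξ0
  refine ⟨?_, ?_, fun t ht1 htT => ?_, fun t ht1 htT => ?_⟩
  · calc ∫ ω, ξ 0 ω * S 0 ω ∂P = ∫ _, S0 ∂P := integral_congr_ae <| by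
          filter_upwards [hξ0, hfeas] with ω h1 h2
          rw [h1, one_mul]; exact h2.1
      _ = S0 := by simp
  · calc ∫ ω, ξ T ω * S T ω ∂P = ∫ ω, ξ T ω * ST ∂P := integral_congr_ae <| by
          filter_upwards [hfeas] with ω h
          exact congrArg _ h.2.1
      _ = ST := by rw [integral_mul_const, hmean, one_mul]
  · have hcap : ∀ᵐ ω ∂P, S t ω ∈ Icc 0 E := hfeas.mono fun _ h => h.2.2.1 t ht1 htT
    exact (convex_Icc 0 E).integral_smul_mem isClosed_Icc (hξnn t) (hξ.integrable t) (hmean t)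
      hcap ((hξ.integrable t).mul_of_ae_mem_isCompact (hSm t) isCompact_Icc hcap)
  · have hrate : ∀ᵐ ω ∂P, S t ω - ρ * S (t - 1) ω ∈ Icc (-Po) Pi :=
      hfeas.mono fun _ h => h.2.2.2 t ht1 htT
    rw [← integral_mul_sub_mul_eq_of_isFeasibleLevels hξ hS hfeas htT]
    exact (convex_Icc (-Po) Pi).integral_smul_mem isClosed_Icc (hξnn t) (hξ.integrable t)
      (hmean t) hrate ((hξ.integrable t).mul_of_ae_mem_isCompact
        ((hSm t).sub ((hSm (t - 1)).const_mul ρ)) isCompact_Icc hrate)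

end Storage

theorem martingale_scaling_corollary_general
    {Ω : Type*} {m0 : MeasurableSpace Ω} (P : Measure Ω) [IsProbabilityMeasure P]
    (ℱ : Filtration ℕ m0)
    (ξ : ℕ → Ω → ℝ) (hmart : Martingale ξ ℱ P)
    (hpos : ∀ t, ∀ᵐ ω ∂P, 0 < ξ t ω)
    (hξ0 : ξ 0 =ᵐ[P] fun _ => 1)
    (T : ℕ)
    (Cbar : ℕ → ℝ → ℝ) (hCbar : ∀ t, ConvexOn ℝ Set.univ (Cbar t))
    (Po Pi E ρ S0 ST : ℝ)
    -- Sbar is an optimal solution of the deterministic problem (costs C̄_t)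
    (Sbar : ℕ → ℝ)
    (hSbarmin : ∀ S' : ℕ → ℝ, S' 0 = S0 → S' T = ST →
      (∀ t, 1 ≤ t → t ≤ T - 1 → 0 ≤ S' t ∧ S' t ≤ E) →
      (∀ t, 1 ≤ t → t ≤ T →
        -Po ≤ S' t - ρ * S' (t - 1) ∧ S' t - ρ * S' (t - 1) ≤ Pi) →
      ∑ t ∈ Finset.Icc 1 T, Cbar t (Sbar t - ρ * Sbar (t - 1))
        ≤ ∑ t ∈ Finset.Icc 1 T, Cbar t (S' t - ρ * S' (t - 1))) :
    -- (a) the stochastic cost of the deterministic optimal strategy equals the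
    --     deterministic optimal value
    (∫ ω, ∑ t ∈ Finset.Icc 1 T, ξ t ω * Cbar t (Sbar t - ρ * Sbar (t - 1)) ∂P
        = ∑ t ∈ Finset.Icc 1 T, Cbar t (Sbar t - ρ * Sbar (t - 1))) ∧
    -- (b) no adapted feasible strategy does better
    (∀ S : ℕ → Ω → ℝ, Adapted ℱ S →
      (∀ᵐ ω ∂P, S 0 ω = S0 ∧ S T ω = ST ∧
        (∀ t, 1 ≤ t → t ≤ T - 1 → 0 ≤ S t ω ∧ S t ω ≤ E) ∧
        (∀ t, 1 ≤ t → t ≤ T →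
          -Po ≤ S t ω - ρ * S (t - 1) ω ∧ S t ω - ρ * S (t - 1) ω ≤ Pi)) →
      Integrable (fun ω =>
        ∑ t ∈ Finset.Icc 1 T, ξ t ω * Cbar t (S t ω - ρ * S (t - 1) ω)) P →
      ∑ t ∈ Finset.Icc 1 T, Cbar t (Sbar t - ρ * Sbar (t - 1))
        ≤ ∫ ω, ∑ t ∈ Finset.Icc 1 T, ξ t ω * Cbar t (S t ω - ρ * S (t - 1) ω) ∂P) := by
  have hmean := hmart.integral_eq_one hξ0
  have hξnn : ∀ t, 0 ≤ᵐ[P] ξ t := fun t => (hpos t).mono fun _ h => h.le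
  refine ⟨?_, fun S hS hfeas _ => ?_⟩
  · rw [integral_finsetSum _ fun t _ => (hmart.integrable t).mul_const _]
    exact Finset.sum_congr rfl fun t _ => by rw [integral_mul_const, hmean t, one_mul]
  have hfeas' : ∀ᵐ ω ∂P, IsFeasibleLevels T S0 ST E Po Pi ρ fun t => S t ω := hfeas
  have hS' := isFeasibleLevels_integral_mul hmart hξ0 hξnn hS hfeas'
  have hrate : ∀ t ∈ Finset.Icc 1 T, ∀ᵐ ω ∂P, S t ω - ρ * S (t - 1) ω ∈ Icc (-Po) Pi :=
    fun t ht => hfeas'.mono fun _ h => h.2.2.2 t (Finset.mem_Icc.1 ht).1 (Finset.mem_Icc.1 ht).2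
  have hrateM : ∀ t, AEStronglyMeasurable (fun ω => S t ω - ρ * S (t - 1) ω) P := fun t =>
    (((hS t).stronglyMeasurable.mono (ℱ.le t)).sub
      (((hS (t - 1)).stronglyMeasurable.mono (ℱ.le (t - 1))).const_mul ρ)).aestronglyMeasurable
  have hCbarc : ∀ t, Continuous (Cbar t) := fun t =>
    continuousOn_univ.1 ((hCbar t).continuousOn isOpen_univ)
  calc ∑ t ∈ Finset.Icc 1 T, Cbar t (Sbar t - ρ * Sbar (t - 1))
      ≤ ∑ t ∈ Finset.Icc 1 T, Cbar t (∫ ω, ξ t ω * (S t ω - ρ * S (t - 1) ω) ∂P) := by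
        refine (hSbarmin _ hS'.1 hS'.2.1 hS'.2.2.1 hS'.2.2.2).trans_eq
          (Finset.sum_congr rfl fun t ht => ?_)
        rw [integral_mul_sub_mul_eq_of_isFeasibleLevels hmart hS hfeas' (Finset.mem_Icc.1 ht).2]
    _ ≤ ∑ t ∈ Finset.Icc 1 T, ∫ ω, ξ t ω * Cbar t (S t ω - ρ * S (t - 1) ω) ∂P :=
        Finset.sum_le_sum fun t ht => (hCbar t).map_integral_mul_le_of_ae_mem_Icc (hξnn t)
          (hmart.integrable t) (hmean t) (hrateM t) (hrate t ht)
    _ = ∫ ω, ∑ t ∈ Finset.Icc 1 T, ξ t ω * Cbar t (S t ω - ρ * S (t - 1) ω) ∂P :=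
        (integral_finsetSum _ fun t ht => (hmart.integrable t).mul_comp_of_ae_mem_isCompact
          (hCbarc t) (hrateM t) isCompact_Icc (hrate t ht)).symm

/-- Corollary of the martingale cost-scaling theorem: with ξ₀ = 1, the optimal value
of the stochastic storage problem equals the deterministic optimal value, and the
deterministic optimal sequence of store levels is optimal for the stochastic problem. -/
theorem martingale_scaling_corollary
    {Ω : Type*} {m0 : MeasurableSpace Ω} (P : Measure Ω) [IsProbabilityMeasure P]
    (ℱ : Filtration ℕ m0)
    (ξ : ℕ → Ω → ℝ) (hmart : Martingale ξ ℱ P)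
    (hpos : ∀ t, ∀ᵐ ω ∂P, 0 < ξ t ω)
    (hξ0 : ξ 0 =ᵐ[P] fun _ => 1)
    (T : ℕ) (hT : 1 ≤ T)
    (Cbar : ℕ → ℝ → ℝ) (hCbar : ∀ t, ConvexOn ℝ Set.univ (Cbar t))
    (Po Pi E ρ S0 ST : ℝ) (hρ0 : 0 < ρ) (hρ1 : ρ ≤ 1) (hE : 0 < E)
    -- Sbar is an optimal solution of the deterministic problem (costs C̄_t)
    (Sbar : ℕ → ℝ)
    (hSbar0 : Sbar 0 = S0) (hSbarT : Sbar T = ST)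
    (hSbarcap : ∀ t, 1 ≤ t → t ≤ T - 1 → 0 ≤ Sbar t ∧ Sbar t ≤ E)
    (hSbarrate : ∀ t, 1 ≤ t → t ≤ T →
      -Po ≤ Sbar t - ρ * Sbar (t - 1) ∧ Sbar t - ρ * Sbar (t - 1) ≤ Pi)
    (hSbarmin : ∀ S' : ℕ → ℝ, S' 0 = S0 → S' T = ST →
      (∀ t, 1 ≤ t → t ≤ T - 1 → 0 ≤ S' t ∧ S' t ≤ E) →
      (∀ t, 1 ≤ t → t ≤ T →
        -Po ≤ S' t - ρ * S' (t - 1) ∧ S' t - ρ * S' (t - 1) ≤ Pi) →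
      ∑ t ∈ Finset.Icc 1 T, Cbar t (Sbar t - ρ * Sbar (t - 1))
        ≤ ∑ t ∈ Finset.Icc 1 T, Cbar t (S' t - ρ * S' (t - 1))) :
    -- (a) the stochastic cost of the deterministic optimal strategy equals the
    --     deterministic optimal value
    (∫ ω, ∑ t ∈ Finset.Icc 1 T, ξ t ω * Cbar t (Sbar t - ρ * Sbar (t - 1)) ∂P
        = ∑ t ∈ Finset.Icc 1 T, Cbar t (Sbar t - ρ * Sbar (t - 1))) ∧
    -- (b) no adapted feasible strategy does better
    (∀ S : ℕ → Ω → ℝ, Adapted ℱ S →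
      (∀ᵐ ω ∂P, S 0 ω = S0 ∧ S T ω = ST ∧
        (∀ t, 1 ≤ t → t ≤ T - 1 → 0 ≤ S t ω ∧ S t ω ≤ E) ∧
        (∀ t, 1 ≤ t → t ≤ T →
          -Po ≤ S t ω - ρ * S (t - 1) ω ∧ S t ω - ρ * S (t - 1) ω ≤ Pi)) →
      Integrable (fun ω =>
        ∑ t ∈ Finset.Icc 1 T, ξ t ω * Cbar t (S t ω - ρ * S (t - 1) ω)) P →
      ∑ t ∈ Finset.Icc 1 T, Cbar t (Sbar t - ρ * Sbar (t - 1))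
        ≤ ∫ ω, ∑ t ∈ Finset.Icc 1 T, ξ t ω * Cbar t (S t ω - ρ * S (t - 1) ω) ∂P) :=
  martingale_scaling_corollary_general P ℱ ξ hmart hpos hξ0 T Cbar hCbar Po Pi E ρ S0 ST Sbar
    hSbarmin
end
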